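/- (Correctness of the 3D-MTM-NL recurrence, vertical case) With h, v as defined for feasible no-left-turn monotone lattice paths, for a vertex v with lower neighbor v′: if the weight w_{v′} violates u_1 ≤ w_{v′} ≤ u_2 then v_v = ∞; otherwise v_v = min(h_{v′} + 1, v_{v′}). -/

import Mathlib

/-!
A path ending with an up step at `v = (a, b + 1)` is a feasible grid path to the lower
neighbour `v' = (a, b)` followed by that step. The step itself is feasible iff
`w v' ∈ [u₁, u₂]`, and it adds a turn exactly when the path to `v'` ends horizontally.
Hence the turn counts at `v` are those ending vertically at `v'`, together with those
ending horizontally at `v'` shifted by one, and the infimum splits accordingly. When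
`v'` is the origin, the empty path plays the role of the conventions `h_O = v_O = 0`.
-/

/-- The vertex reached after the first `k` steps of a monotone lattice path starting
at the origin, where `true` is a right step `(+1,0)` and `false` is an up step `(0,+1)`. -/
def pathPos (s : List Bool) (k : ℕ) : ℕ × ℕ :=
  ((s.take k).count true, (s.take k).count false)

/-- All vertices of the path lie in the `n × n` grid `{0, …, n-1}²`. -/
def InGrid (n : ℕ) (s : List Bool) : Prop :=
  ∀ k ≤ s.length, (pathPos s k).1 < n ∧ (pathPos s k).2 < n

/-- The number of turns of the path: positions where consecutive steps differ. -/
def pathTurns (s : List Bool) : ℕ :=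
  (s.zip s.tail).countP (fun q => q.1 != q.2)

/-- The energy collected by the path: sum of the weights of the vertices on its
vertical (up) runs, excluding each run's top endpoint, i.e. the vertices at the
bottom of each up step. -/
def pathEnergy (w : ℕ × ℕ → ℝ) (s : List Bool) : ℝ :=
  ∑ j ∈ Finset.range s.length, if s.getD j true = false then w (pathPos s j) else 0

/-- The path is feasible for the thresholds `u₁ ≤ u₂`: every vertical point
(vertex at the bottom of an up step) has weight in `[u₁, u₂]`. -/
def Feasible (w : ℕ × ℕ → ℝ) (u₁ u₂ : ℝ) (s : List Bool) : Prop :=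
  ∀ j < s.length, s.getD j true = false →
    u₁ ≤ w (pathPos s j) ∧ w (pathPos s j) ≤ u₂

/-- `hval n w u₁ u₂ v` is the minimum number of turns over feasible no-left-turn
monotone lattice paths from the origin to `v` whose last step is horizontal
(`⊤` if none exists), with the base case `hval O = 0`. -/
noncomputable def hval (n : ℕ) (w : ℕ × ℕ → ℝ) (u₁ u₂ : ℝ) (v : ℕ × ℕ) : ℕ∞ :=
  if v = (0, 0) then 0 else
    sInf {c : ℕ∞ | ∃ s : List Bool, InGrid n s ∧ Feasible w u₁ u₂ s ∧
      pathPos s s.length = v ∧ s.getLast? = some true ∧ c = (pathTurns s : ℕ∞)}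

/-- `vval n w u₁ u₂ v` is the analogous minimum over feasible paths whose last step
is vertical, with the base case `vval O = 0`. -/
noncomputable def vval (n : ℕ) (w : ℕ × ℕ → ℝ) (u₁ u₂ : ℝ) (v : ℕ × ℕ) : ℕ∞ :=
  if v = (0, 0) then 0 else
    sInf {c : ℕ∞ | ∃ s : List Bool, InGrid n s ∧ Feasible w u₁ u₂ s ∧
      pathPos s s.length = v ∧ s.getLast? = some false ∧ c = (pathTurns s : ℕ∞)}

lemma ENat.sInf_image_add_one (T : Set ℕ∞) : sInf ((· + 1) '' T) = sInf T + 1 := by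
  rw [sInf_image, ENat.sInf_add]

lemma pathPos_append_of_le {s : List Bool} (t : List Bool) {k : ℕ} (hk : k ≤ s.length) :
    pathPos (s ++ t) k = pathPos s k := by
  simp [pathPos, List.take_append_of_le_length hk]

lemma pathPos_length (s : List Bool) : pathPos s s.length = (s.count true, s.count false) := by
  simp [pathPos]

lemma pathPos_length_concat_false (s : List Bool) :
    pathPos (s ++ [false]) (s ++ [false]).length =
      ((pathPos s s.length).1, (pathPos s s.length).2 + 1) := by
  rw [pathPos_length, pathPos_length]
  simp

lemma inGrid_concat_false_iff {n : ℕ} {s : List Bool} :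
    InGrid n (s ++ [false]) ↔ InGrid n s ∧ (pathPos s s.length).2 + 1 < n := by
  constructor
  · intro h
    refine ⟨fun k hk => ?_, ?_⟩
    · simpa [pathPos_append_of_le _ hk] using h k (by simp; omega)
    · simpa only [pathPos_length_concat_false] using (h _ le_rfl).2
  · rintro ⟨h, hlast⟩ k hk
    obtain hk | rfl : k ≤ s.length ∨ k = (s ++ [false]).length := by simp at hk ⊢; omega
    · rw [pathPos_append_of_le _ hk]
      exact h k hk
    · rw [pathPos_length_concat_false]
      exact ⟨(h _ le_rfl).1, hlast⟩

lemma feasible_concat_false_iff {w : ℕ × ℕ → ℝ} {u₁ u₂ : ℝ} {s : List Bool} :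
    Feasible w u₁ u₂ (s ++ [false]) ↔
      Feasible w u₁ u₂ s ∧ u₁ ≤ w (pathPos s s.length) ∧ w (pathPos s s.length) ≤ u₂ := by
  constructor
  · intro h
    refine ⟨fun j hj hd => ?_, ?_⟩
    · simpa [pathPos_append_of_le _ hj.le] using
        h j (by simp; omega) (by rwa [List.getD_append _ _ _ _ hj])
    · simpa [pathPos_append_of_le _ le_rfl] using h s.length (by simp) (by simp)
  · rintro ⟨h, hlast⟩ j hj hd
    obtain hj | rfl : j < s.length ∨ j = s.length := by simp at hj; omega
    · rw [List.getD_append _ _ _ _ hj] at hd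
      rw [pathPos_append_of_le _ hj.le]
      exact h j hj hd
    · rwa [pathPos_append_of_le _ le_rfl]

lemma pathTurns_cons_cons (a b : Bool) (t : List Bool) :
    pathTurns (a :: b :: t) = pathTurns (b :: t) + if a = b then 0 else 1 := by
  cases a <;> cases b <;> simp [pathTurns]

lemma pathTurns_concat : ∀ (s : List Bool) (x : Bool),
    pathTurns (s ++ [x]) = pathTurns s + if s.getLast? = some (!x) then 1 else 0
  | [], x => by simp [pathTurns]
  | [a], x => by cases a <;> cases x <;> simp [pathTurns]
  | a :: b :: t, x => by
      rw [List.cons_append, List.cons_append, pathTurns_cons_cons, ← List.cons_append,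
        pathTurns_concat (b :: t), pathTurns_cons_cons, List.getLast?_cons_cons]
      omega

def turnCounts (n : ℕ) (w : ℕ × ℕ → ℝ) (u₁ u₂ : ℝ) (v : ℕ × ℕ) (d : Option Bool) :
    Set ℕ∞ :=
  {c | ∃ s : List Bool, InGrid n s ∧ Feasible w u₁ u₂ s ∧
    pathPos s s.length = v ∧ s.getLast? = d ∧ c = (pathTurns s : ℕ∞)}

section turnCounts

variable {n : ℕ} {w : ℕ × ℕ → ℝ} {u₁ u₂ : ℝ}

lemma hval_of_ne_zero {v : ℕ × ℕ} (hv : v ≠ (0, 0)) :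
    hval n w u₁ u₂ v = sInf (turnCounts n w u₁ u₂ v (some true)) :=
  if_neg hv

lemma vval_of_ne_zero {v : ℕ × ℕ} (hv : v ≠ (0, 0)) :
    vval n w u₁ u₂ v = sInf (turnCounts n w u₁ u₂ v (some false)) :=
  if_neg hv

lemma turnCounts_none_of_ne_zero {v : ℕ × ℕ} (hv : v ≠ (0, 0)) :
    turnCounts n w u₁ u₂ v none = ∅ := by
  refine Set.eq_empty_of_forall_notMem ?_
  rintro c ⟨s, -, -, hp, hl, -⟩
  rw [List.getLast?_eq_none_iff] at hl
  subst hl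
  exact hv (by simpa [pathPos] using hp.symm)

lemma zero_mem_turnCounts_none (hn : 0 < n) : 0 ∈ turnCounts n w u₁ u₂ (0, 0) none :=
  ⟨[], fun k hk => by simp_all [pathPos], fun j hj => by simp at hj, rfl, rfl, rfl⟩

lemma concat_false_mem_turnCounts {a b : ℕ} {s : List Bool} (hb : b + 1 < n)
    (hw : u₁ ≤ w (a, b) ∧ w (a, b) ≤ u₂) (hg : InGrid n s) (hf : Feasible w u₁ u₂ s)
    (hp : pathPos s s.length = (a, b)) :
    (pathTurns (s ++ [false]) : ℕ∞) ∈ turnCounts n w u₁ u₂ (a, b + 1) (some false) :=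
  ⟨s ++ [false], inGrid_concat_false_iff.2 ⟨hg, by rwa [hp]⟩,
    feasible_concat_false_iff.2 ⟨hf, by rwa [hp]⟩,
    by rw [pathPos_length_concat_false, hp], List.getLast?_concat, rfl⟩

lemma exists_of_mem_turnCounts_up {a b : ℕ} {c : ℕ∞}
    (hc : c ∈ turnCounts n w u₁ u₂ (a, b + 1) (some false)) :
    (u₁ ≤ w (a, b) ∧ w (a, b) ≤ u₂) ∧ ∃ s : List Bool, InGrid n s ∧ Feasible w u₁ u₂ s ∧
      pathPos s s.length = (a, b) ∧ c = (pathTurns (s ++ [false]) : ℕ∞) := by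
  obtain ⟨s, hg, hf, hp, hl, rfl⟩ := hc
  obtain ⟨s, rfl⟩ : ∃ s', s = s' ++ [false] := by
    rcases List.eq_nil_or_concat' s with rfl | ⟨s', x, rfl⟩
    · simp at hl
    · exact ⟨s', by simp_all⟩
  have hp' : pathPos s s.length = (a, b) := by
    rw [pathPos_length_concat_false, Prod.mk.injEq] at hp
    exact Prod.ext hp.1 (by omega)
  have hf' := feasible_concat_false_iff.1 hf
  rw [hp'] at hf'
  exact ⟨hf'.2, s, (inGrid_concat_false_iff.1 hg).1, hf'.1, hp', rfl⟩

lemma turnCounts_up_eq_empty {a b : ℕ} (hw : ¬ (u₁ ≤ w (a, b) ∧ w (a, b) ≤ u₂)) :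
    turnCounts n w u₁ u₂ (a, b + 1) (some false) = ∅ :=
  Set.eq_empty_of_forall_notMem fun _ hc => hw (exists_of_mem_turnCounts_up hc).1

lemma turnCounts_up {a b : ℕ} (hb : b + 1 < n) (hw : u₁ ≤ w (a, b) ∧ w (a, b) ≤ u₂) :
    turnCounts n w u₁ u₂ (a, b + 1) (some false) =
      turnCounts n w u₁ u₂ (a, b) none ∪ turnCounts n w u₁ u₂ (a, b) (some false) ∪
        (· + 1) '' turnCounts n w u₁ u₂ (a, b) (some true) := by
  ext c
  constructor
  · intro hc
    obtain ⟨-, s, hg, hf, hp, rfl⟩ := exists_of_mem_turnCounts_up hc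
    rw [pathTurns_concat]
    rcases hl : s.getLast? with _ | _ | _
    · exact .inl (.inl ⟨s, hg, hf, hp, hl, by simp⟩)
    · exact .inl (.inr ⟨s, hg, hf, hp, hl, by simp⟩)
    · exact .inr ⟨_, ⟨s, hg, hf, hp, hl, rfl⟩, by simp⟩
  · rintro ((⟨s, hg, hf, hp, hl, rfl⟩ | ⟨s, hg, hf, hp, hl, rfl⟩) |
      ⟨_, ⟨s, hg, hf, hp, hl, rfl⟩, rfl⟩)
    all_goals
      convert concat_false_mem_turnCounts hb hw hg hf hp using 1
      simp [pathTurns_concat, hl]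

end turnCounts

theorem vval_recurrence_general (n : ℕ) (w : ℕ × ℕ → ℝ) (u₁ u₂ : ℝ)
    (v : ℕ × ℕ) (h1 : 0 < v.2) (h3 : v.2 < n) :
    (¬ (u₁ ≤ w (v.1, v.2 - 1) ∧ w (v.1, v.2 - 1) ≤ u₂) →
      vval n w u₁ u₂ v = ⊤) ∧
    ((u₁ ≤ w (v.1, v.2 - 1) ∧ w (v.1, v.2 - 1) ≤ u₂) →
      vval n w u₁ u₂ v =
        min (hval n w u₁ u₂ (v.1, v.2 - 1) + 1) (vval n w u₁ u₂ (v.1, v.2 - 1))) := by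
  obtain ⟨a, b⟩ := v
  obtain ⟨b, rfl⟩ := Nat.exists_eq_add_one_of_ne_zero h1.ne'
  simp only [Nat.add_sub_cancel]
  rw [vval_of_ne_zero (by simp)]
  refine ⟨fun hw => by rw [turnCounts_up_eq_empty hw, sInf_empty], fun hw => ?_⟩
  rw [turnCounts_up h3 hw]
  by_cases hO : (a, b) = (0, 0)
  · have h0 : 0 ∈ turnCounts n w u₁ u₂ (a, b) none := hO ▸ zero_mem_turnCounts_none (by omega)
    rw [nonpos_iff_eq_zero.1 (sInf_le (Set.mem_union_left _ (Set.mem_union_left _ h0)))]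
    simp [hval, vval, hO]
  · rw [hval_of_ne_zero hO, vval_of_ne_zero hO, turnCounts_none_of_ne_zero hO,
      Set.empty_union, sInf_union, ENat.sInf_image_add_one, min_comm]

/-- Correctness of the 3D-MTM-NL recurrence, vertical case: for a vertex `v` with
lower neighbor `v'`, `v_v = ⊤` if `w v'` violates the thresholds, and otherwise
`v_v = min (h_v' + 1) (v_v')`. -/
theorem vval_recurrence (n : ℕ) (w : ℕ × ℕ → ℝ) (u₁ u₂ : ℝ) (hu : u₁ ≤ u₂)
    (v : ℕ × ℕ) (h1 : 0 < v.2) (h2 : v.1 < n) (h3 : v.2 < n) :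
    (¬ (u₁ ≤ w (v.1, v.2 - 1) ∧ w (v.1, v.2 - 1) ≤ u₂) →
      vval n w u₁ u₂ v = ⊤) ∧
    ((u₁ ≤ w (v.1, v.2 - 1) ∧ w (v.1, v.2 - 1) ≤ u₂) →
      vval n w u₁ u₂ v =
        min (hval n w u₁ u₂ (v.1, v.2 - 1) + 1) (vval n w u₁ u₂ (v.1, v.2 - 1))) :=
  vval_recurrence_general n w u₁ u₂ v h1 h3
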